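/- If p is a Labos prime with p = p_n for n ≥ 3, then all integers strictly between p_{n-1}/2 and p_n/2 are composite. -/

import Mathlib

/-- The n-th prime, 1-indexed: p 1 = 2, p 2 = 3, ... -/
noncomputable def p (n : ℕ) : ℕ := Nat.nth Nat.Prime (n - 1)

/-- Prime counting function extended to real arguments. -/
noncomputable def piR (x : ℝ) : ℕ := Nat.primeCounting ⌊x⌋₊

/-- `q` is a Labos prime: `q = L_n` for some `n ≥ 1`. -/
def IsLabos (q : ℕ) : Prop :=
  ∃ n : ℕ, 1 ≤ n ∧ IsLeast {L : ℕ | 0 < L ∧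
    piR (L : ℝ) - piR ((L : ℝ) / 2) = n} q

lemma piR_nat (a : ℕ) : piR (a : ℝ) = Nat.primeCounting a := by
  simp [piR]

lemma piR_nat_half (a : ℕ) : piR ((a : ℝ) / 2) = Nat.primeCounting (a / 2) := by
  have : ((a : ℝ) / 2) = (a : ℝ) / ((2 : ℕ) : ℝ) := by norm_num
  rw [piR, this, Nat.floor_div_natCast, Nat.floor_natCast]

lemma pi_eq : ∀ a : ℕ, Nat.primeCounting a = Nat.count Nat.Prime (a + 1) := fun _ => rfl

lemma count_stable (a b : ℕ) (hab : a ≤ b)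
    (h : ∀ r, a < r → r ≤ b → ¬ Nat.Prime r) :
    Nat.count Nat.Prime (b + 1) = Nat.count Nat.Prime (a + 1) := by
  induction b with
  | zero =>
    have : a = 0 := by omega
    subst this; rfl
  | succ b ih =>
    rcases eq_or_lt_of_le hab with rfl | h'
    · rfl
    · have hb : a ≤ b := Nat.lt_succ_iff.mp h'
      rw [Nat.count_succ, if_neg (h (b + 1) (by omega) le_rfl)]
      exact ih hb (fun r h1 h2 => h r h1 (by omega))

lemma pi_nth (k : ℕ) : Nat.primeCounting (Nat.nth Nat.Prime k) = k + 1 := by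
  rw [pi_eq, Nat.count_succ, if_pos (Nat.prime_nth_prime k),
    Nat.count_nth_of_infinite Nat.infinite_setOf_prime]

lemma pi_between (k m : ℕ) (h1 : Nat.nth Nat.Prime k ≤ m)
    (h2 : m < Nat.nth Nat.Prime (k + 1)) :
    Nat.primeCounting m = k + 1 := by
  have hlo : k + 1 ≤ Nat.primeCounting m := by
    rw [← pi_nth k]
    exact Nat.monotone_primeCounting h1
  have hhi : Nat.primeCounting m ≤ k + 1 := by
    rw [pi_eq]
    calc Nat.count Nat.Prime (m + 1) ≤ Nat.count Nat.Prime (Nat.nth Nat.Prime (k + 1)) :=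
          Nat.count_monotone _ (by omega)
      _ = k + 1 := Nat.count_nth_of_infinite Nat.infinite_setOf_prime _
  omega

lemma pi_pred (q : ℕ) (hq : q.Prime) :
    Nat.primeCounting (q - 1) + 1 = Nat.primeCounting q := by
  have h0 := hq.one_lt
  have h1 : q - 1 + 1 = q := by omega
  rw [pi_eq, pi_eq, h1, Nat.count_succ, if_pos hq]

theorem stmt_13 (n : ℕ) (hn : 3 ≤ n) (hlab : IsLabos (p n)) :
    ∀ q : ℕ, (p (n - 1) : ℝ) / 2 < (q : ℝ) → (q : ℝ) < (p n : ℝ) / 2 →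
      1 < q ∧ ¬ q.Prime := by
  intro q hq1 hq2
  set P := p n with hP
  set Q := p (n - 1) with hQ
  have hPnth : P = Nat.nth Nat.Prime (n - 1) := rfl
  have hQnth : Q = Nat.nth Nat.Prime (n - 2) := by
    have e : n - 1 - 1 = n - 2 := by omega
    rw [hQ]; unfold p; rw [e]
  have hQ3 : 3 ≤ Q := by
    have hmono : Nat.nth Nat.Prime 1 ≤ Nat.nth Nat.Prime (n - 2) :=
      Nat.nth_monotone Nat.infinite_setOf_prime (by omega)
    rw [Nat.nth_prime_one_eq_three] at hmono
    omega
  -- 1 < q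
  have hq_gt1 : 1 < q := by
    by_contra hc
    have hq1' : (q : ℝ) ≤ 1 := by exact_mod_cast Nat.not_lt.mp hc
    have hQ3' : (3 : ℝ) ≤ (Q : ℝ) := by exact_mod_cast hQ3
    linarith
  refine ⟨hq_gt1, ?_⟩
  intro hqprime
  obtain ⟨m, hm1, ⟨⟨hPpos, heq⟩, hmin⟩⟩ := hlab
  have hQP : Q < P := by
    rw [hPnth, hQnth]
    exact (Nat.nth_lt_nth Nat.infinite_setOf_prime).mpr (by omega)
  have hPodd : Odd P := by
    have hPprime : P.Prime := Nat.prime_nth_prime _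
    exact hPprime.odd_of_ne_two (by omega)
  obtain ⟨M, hM⟩ := hPodd
  have hMdiv : P / 2 = M := by omega
  -- convert real inequalities
  have h1 : Q < 2 * q := by
    have : (Q : ℝ) < 2 * q := by linarith
    exact_mod_cast this
  have h2 : 2 * q < P := by
    have : (2 * q : ℝ) < P := by linarith
    exact_mod_cast this
  -- the set of primes r with Q < 2r < P; take its max q₀
  set S : Finset ℕ := Finset.filter (fun r => Nat.Prime r ∧ Q < 2 * r ∧ 2 * r < P)
    (Finset.range P) with hS
  have hqS : q ∈ S := by
    rw [hS, Finset.mem_filter, Finset.mem_range]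
    exact ⟨by omega, hqprime, h1, h2⟩
  have hSne : S.Nonempty := ⟨q, hqS⟩
  set q₀ := S.max' hSne with hq₀
  have hq₀S : q₀ ∈ S := S.max'_mem hSne
  rw [hS, Finset.mem_filter] at hq₀S
  obtain ⟨-, hq₀prime, hq₀1, hq₀2⟩ := hq₀S
  have hq₀M : q₀ ≤ M := by omega
  -- no primes in (q₀, M]
  have hnoprime : ∀ r, q₀ < r → r ≤ M → ¬ Nat.Prime r := by
    intro r hr1 hr2 hrprime
    have hrS : r ∈ S := by
      rw [hS, Finset.mem_filter, Finset.mem_range]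
      exact ⟨by omega, hrprime, by omega, by omega⟩
    have := S.le_max' r hrS
    omega
  -- prime counting computations
  have hpiP : Nat.primeCounting P = n := by
    rw [hPnth, pi_nth]; omega
  have hpiM : Nat.primeCounting q₀ = Nat.primeCounting M := by
    rw [pi_eq, pi_eq]
    exact (count_stable q₀ M hq₀M hnoprime).symm
  have hpi2q : Nat.primeCounting (2 * q₀ - 1) = n - 1 := by
    have := pi_between (n - 2) (2 * q₀ - 1) (by rw [← hQnth]; omega)
      (by rw [show n - 2 + 1 = n - 1 by omega, ← hPnth]; omega)
    omega
  have hpiq₀ := pi_pred q₀ hq₀prime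
  -- from heq : π P - π (P/2) = m (nat subtraction)
  rw [piR_nat, piR_nat_half, hpiP, hMdiv] at heq
  have hMn : Nat.primeCounting M + m = n := by omega
  -- the candidate L = 2q₀ - 1 beats P, contradiction
  have hcand : (2 * q₀ - 1) ∈ {L : ℕ | 0 < L ∧
      piR (L : ℝ) - piR ((L : ℝ) / 2) = m} := by
    constructor
    · have := hq₀prime.one_lt; omega
    · rw [piR_nat, piR_nat_half, hpi2q, show (2 * q₀ - 1) / 2 = q₀ - 1 by omega]
      omega
  have := hmin hcand
  omega
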